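/- Gaussian mechanism under zCDP: let f be a function with ℓ₂-sensitivity Δ₂ (i.e., ||f(D) − f(D')||₂ ≤ Δ₂ for adjacent D, D'). For any ρ > 0, the mechanism A(D) = f(D) + N(0, σ²I_d) with σ² = Δ₂²/(2ρ) satisfies ρ-zCDP. -/

import Mathlib

open MeasureTheory ProbabilityTheory
open scoped ENNReal NNReal

/-- Rényi divergence of order `α` between two measures, via the Radon–Nikodym
derivative: `(α-1)⁻¹ log ∫ (dP/dQ)^α dQ`. -/
noncomputable def renyiDivM {Ω : Type*} [MeasurableSpace Ω] (α : ℝ)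
    (P Q : Measure Ω) : ℝ :=
  (α - 1)⁻¹ * Real.log (∫ x, (P.rnDeriv Q x).toReal ^ α ∂Q)

/-- `ρ`-zCDP for a measure-valued mechanism. -/
def zCDPm {D Ω : Type*} [MeasurableSpace Ω] (Adj : D → D → Prop)
    (M : D → Measure Ω) (ρ : ℝ) : Prop :=
  ∀ d d', Adj d d' → ∀ α : ℝ, 1 < α → renyiDivM α (M d) (M d') ≤ ρ * α

/-!
The product of the Gaussians `N(μᵢ, v)` is the product of the Gaussians `N(μ'ᵢ, v)` reweighted by
the product of the one-dimensional likelihood ratios, so the Rényi moment `∫ (dP/dQ)^α dQ`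
factorizes over the coordinates. In one dimension, completing the square gives
`(p_μ / p_μ')^α p_μ' = exp (α (α - 1) (μ - μ')² / (2v)) p_{αμ + (1-α)μ'}`, hence
`D_α(P ‖ Q) = α ‖μ - μ'‖² / (2v)`, which is at most `α Δ₂² / (2v) = ρ α` for adjacent inputs.
-/

namespace MeasureTheory

theorem lintegral_fin_nat_prod_eq_prod {n : ℕ} {E : Type*} [MeasurableSpace E]
    {μ : Fin n → Measure E} [∀ i, SigmaFinite (μ i)]
    {f : Fin n → E → ℝ≥0∞} (hf : ∀ i, Measurable (f i)) :
    ∫⁻ x, ∏ i, f i (x i) ∂Measure.pi μ = ∏ i, ∫⁻ x, f i x ∂μ i := by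
  induction n with
  | zero => simp
  | succ n ih =>
    calc
      _ = ∫⁻ x : E × (Fin n → E), f 0 x.1 * ∏ i : Fin n, f i.succ (x.2 i)
          ∂((μ 0).prod (Measure.pi fun i ↦ μ i.succ)) := by
        rw [← ((measurePreserving_piFinSuccAbove μ 0).symm).lintegral_comp_emb
          (MeasurableEquiv.measurableEmbedding _)]
        simp_rw [MeasurableEquiv.piFinSuccAbove_symm_apply, Fin.insertNthEquiv,
          Fin.prod_univ_succ, Fin.insertNth_zero, Equiv.coe_fn_mk, Fin.cons_succ,
          Fin.zero_succAbove, cast_eq, Fin.cons_zero]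
      _ = (∫⁻ x, f 0 x ∂μ 0) * ∏ i : Fin n, ∫⁻ x, f i.succ x ∂μ i.succ := by
        have hprod : Measurable fun y : Fin n → E ↦ ∏ i, f i.succ (y i) :=
          Finset.measurable_prod _ fun i _ ↦ (hf i.succ).comp (measurable_pi_apply i)
        rw [lintegral_prod_mul (hf 0).aemeasurable hprod.aemeasurable, ih fun i ↦ hf i.succ]
      _ = _ := (Fin.prod_univ_succ (fun i ↦ ∫⁻ x, f i x ∂μ i)).symm

theorem lintegral_fintype_prod_eq_prod {ι : Type*} [Fintype ι] {E : Type*} [MeasurableSpace E]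
    {μ : ι → Measure E} [∀ i, SigmaFinite (μ i)]
    {f : ι → E → ℝ≥0∞} (hf : ∀ i, Measurable (f i)) :
    ∫⁻ x, ∏ i, f i (x i) ∂Measure.pi μ = ∏ i, ∫⁻ x, f i x ∂μ i := by
  let e := (Fintype.equivFin ι).symm
  rw [← (measurePreserving_piCongrLeft _ e).lintegral_comp_emb
    (MeasurableEquiv.measurableEmbedding _)]
  simp_rw [← e.prod_comp, MeasurableEquiv.coe_piCongrLeft, Equiv.piCongrLeft_apply_apply]
  exact lintegral_fin_nat_prod_eq_prod fun i ↦ hf (e i)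

theorem Measure.pi_withDensity {ι : Type*} [Fintype ι] {E : Type*} [MeasurableSpace E]
    {ν : ι → Measure E} [∀ i, SigmaFinite (ν i)] {g : ι → E → ℝ≥0∞} (hg : ∀ i, Measurable (g i))
    [∀ i, SigmaFinite ((ν i).withDensity (g i))] :
    Measure.pi (fun i ↦ (ν i).withDensity (g i))
      = (Measure.pi ν).withDensity fun x ↦ ∏ i, g i (x i) := by
  refine Measure.pi_eq fun s hs ↦ ?_
  rw [withDensity_apply _ (MeasurableSet.univ_pi hs), Measure.restrict_pi_pi,
    lintegral_fintype_prod_eq_prod hg]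
  exact Finset.prod_congr rfl fun i _ ↦ (withDensity_apply _ (hs i)).symm

end MeasureTheory

open Real

section Gaussian

variable {v : ℝ≥0}

theorem gaussianReal_eq_withDensity_gaussianReal (hv : v ≠ 0) (μ μ' : ℝ) :
    gaussianReal μ v = (gaussianReal μ' v).withDensity
      fun t ↦ ENNReal.ofReal (gaussianPDFReal μ v t / gaussianPDFReal μ' v t) := by
  have hratio : Measurable fun t ↦
      ENNReal.ofReal (gaussianPDFReal μ v t / gaussianPDFReal μ' v t) := by fun_prop
  rw [gaussianReal_of_var_ne_zero μ hv, gaussianReal_of_var_ne_zero μ' hv,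
    ← withDensity_mul _ (measurable_gaussianPDF _ _) hratio]
  congr 1
  funext t
  rw [Pi.mul_apply, gaussianPDF, gaussianPDF,
    ← ENNReal.ofReal_mul (gaussianPDFReal_nonneg _ _ _),
    mul_div_cancel₀ _ (gaussianPDFReal_pos _ _ _ hv).ne']

theorem gaussianPDFReal_div_rpow_mul (hv : v ≠ 0) (μ μ' α t : ℝ) :
    (gaussianPDFReal μ v t / gaussianPDFReal μ' v t) ^ α * gaussianPDFReal μ' v t
      = exp (α * (α - 1) * (μ - μ') ^ 2 / (2 * v)) *
        gaussianPDFReal (α * μ + (1 - α) * μ') v t := by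
  have hv' : (0 : ℝ) < v := by positivity
  unfold gaussianPDFReal
  rw [mul_div_mul_left _ _ (by positivity), ← exp_sub, ← exp_mul, mul_left_comm,
    mul_left_comm (exp _), ← exp_add, ← exp_add]
  congr 2
  field_simp
  ring

theorem integral_gaussianPDFReal_div_rpow (hv : v ≠ 0) (μ μ' α : ℝ) :
    ∫ t, (gaussianPDFReal μ v t / gaussianPDFReal μ' v t) ^ α ∂gaussianReal μ' v
      = exp (α * (α - 1) * (μ - μ') ^ 2 / (2 * v)) := by
  simp_rw [integral_gaussianReal_eq_integral_smul hv, smul_eq_mul,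
    mul_comm (gaussianPDFReal μ' v _), gaussianPDFReal_div_rpow_mul hv]
  rw [integral_const_mul, integral_gaussianPDFReal_eq_one _ hv, mul_one]

variable {ι : Type*} [Fintype ι]

theorem rnDeriv_pi_gaussianReal (hv : v ≠ 0) (μ μ' : ι → ℝ) :
    (Measure.pi fun i ↦ gaussianReal (μ i) v).rnDeriv (Measure.pi fun i ↦ gaussianReal (μ' i) v)
      =ᵐ[Measure.pi fun i ↦ gaussianReal (μ' i) v]
        fun x ↦ ∏ i,
          ENNReal.ofReal (gaussianPDFReal (μ i) v (x i) / gaussianPDFReal (μ' i) v (x i)) := by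
  have hmeas : ∀ i, Measurable fun t ↦
      ENNReal.ofReal (gaussianPDFReal (μ i) v t / gaussianPDFReal (μ' i) v t) := by fun_prop
  have : ∀ i, SigmaFinite ((gaussianReal (μ' i) v).withDensity fun t ↦
      ENNReal.ofReal (gaussianPDFReal (μ i) v t / gaussianPDFReal (μ' i) v t)) := fun i ↦ by
    rw [← gaussianReal_eq_withDensity_gaussianReal hv]; infer_instance
  have hP : (Measure.pi fun i ↦ gaussianReal (μ i) v) = Measure.pi fun i ↦
      (gaussianReal (μ' i) v).withDensity fun t ↦
        ENNReal.ofReal (gaussianPDFReal (μ i) v t / gaussianPDFReal (μ' i) v t) :=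
    congrArg Measure.pi (funext fun i ↦ gaussianReal_eq_withDensity_gaussianReal hv _ _)
  rw [hP, Measure.pi_withDensity hmeas]
  exact Measure.rnDeriv_withDensity _ (by fun_prop)

theorem renyiDivM_pi_gaussianReal (hv : v ≠ 0) {α : ℝ} (hα : α ≠ 1) (μ μ' : ι → ℝ) :
    renyiDivM α (Measure.pi fun i ↦ gaussianReal (μ i) v)
      (Measure.pi fun i ↦ gaussianReal (μ' i) v) = α * (∑ i, (μ i - μ' i) ^ 2) / (2 * v) := by
  set P := Measure.pi fun i ↦ gaussianReal (μ i) v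
  set Q := Measure.pi fun i ↦ gaussianReal (μ' i) v
  have hrn : P.rnDeriv Q =ᵐ[Q] fun x ↦
      ∏ i, ENNReal.ofReal (gaussianPDFReal (μ i) v (x i) / gaussianPDFReal (μ' i) v (x i)) :=
    rnDeriv_pi_gaussianReal hv μ μ'
  have hmoment : ∫ x, (P.rnDeriv Q x).toReal ^ α ∂Q
      = ∏ i, exp (α * (α - 1) * (μ i - μ' i) ^ 2 / (2 * v)) := by
    calc ∫ x, (P.rnDeriv Q x).toReal ^ α ∂Q
        = ∫ x, ∏ i, (gaussianPDFReal (μ i) v (x i) / gaussianPDFReal (μ' i) v (x i)) ^ α ∂Q := by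
          refine integral_congr_ae (hrn.mono fun x hx ↦ ?_)
          dsimp only at hx ⊢
          rw [hx, ENNReal.toReal_prod, ← Real.finsetProd_rpow _ _ fun i _ ↦ by positivity]
          exact Finset.prod_congr rfl fun i _ ↦ by
            rw [ENNReal.toReal_ofReal (div_nonneg (gaussianPDFReal_nonneg _ _ _)
              (gaussianPDFReal_nonneg _ _ _))]
      _ = _ := (integral_fintype_prod_eq_prod _).trans
          (Finset.prod_congr rfl fun i _ ↦ integral_gaussianPDFReal_div_rpow hv _ _ _)
  have hα' : α - 1 ≠ 0 := sub_ne_zero.mpr hα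
  rw [renyiDivM, hmoment, ← exp_sum, log_exp, ← Finset.sum_div, ← Finset.mul_sum]
  field_simp

theorem renyiDivM_pi_gaussianReal_eq_norm_sq (hv : v ≠ 0) {α : ℝ} (hα : α ≠ 1)
    (x y : EuclideanSpace ℝ ι) :
    renyiDivM α (Measure.pi fun i ↦ gaussianReal (x i) v)
      (Measure.pi fun i ↦ gaussianReal (y i) v) = α * ‖x - y‖ ^ 2 / (2 * v) := by
  simp only [renyiDivM_pi_gaussianReal hv hα, EuclideanSpace.real_norm_sq_eq, PiLp.sub_apply]

end Gaussian

/-- Gaussian mechanism: if `f` has ℓ₂-sensitivity `Δ₂` over adjacent datasets, then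
adding independent `N(0, σ²)` noise with `σ² = Δ₂²/(2ρ)` to every coordinate of `f`
satisfies `ρ`-zCDP. -/
theorem gaussian_mechanism_zCDP {D : Type*} {n : ℕ} (Adj : D → D → Prop)
    (f : D → EuclideanSpace ℝ (Fin n)) (Δ₂ ρ : ℝ) (hΔ : 0 < Δ₂) (hρ : 0 < ρ)
    (hsens : ∀ d d', Adj d d' → ‖f d - f d'‖ ≤ Δ₂)
    (v : ℝ≥0) (hv : (v : ℝ) = Δ₂ ^ 2 / (2 * ρ)) :
    zCDPm Adj (fun d => Measure.pi (fun i : Fin n => gaussianReal (f d i) v)) ρ := by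
  intro d d' hadj α hα
  have hv_pos : (0 : ℝ) < v := hv ▸ by positivity
  rw [renyiDivM_pi_gaussianReal_eq_norm_sq (by exact_mod_cast hv_pos.ne') hα.ne']
  calc α * ‖f d - f d'‖ ^ 2 / (2 * v) ≤ α * Δ₂ ^ 2 / (2 * v) := by
        gcongr
        exact hsens d d' hadj
    _ = ρ * α := by
        rw [hv]
        field_simp
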